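/- Let n = p_1^{m_1} p_2^{m_2} ⋯ p_k^{m_k} with p_1 < p_2 < ⋯ < p_k primes, k ≥ 2, and m_i > 1 for at least two indices i, and let T = ∏_{i=1}^{k}(m_i + 1) − 2 be the number of nonzero proper ideals of Z_n = Z/nZ. Then the metric dimension of the essential ideal graph E_{Z_n} equals T − (2^k − 1). -/

import Mathlib

/-- An ideal `I` of a commutative ring `R` is essential if it is nonzero and has
nonzero intersection with every nonzero ideal of `R`. -/
def IsEssentialIdeal {R : Type*} [CommRing R] (I : Ideal R) : Prop :=
  I ≠ ⊥ ∧ ∀ J : Ideal R, J ≠ ⊥ → I ⊓ J ≠ ⊥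

/-- The essential ideal graph of a commutative ring `R`: vertices are the nonzero
proper ideals of `R`, and distinct vertices `I`, `J` are adjacent iff `I + J` is
an essential ideal of `R`. -/
def essentialIdealGraph (R : Type*) [CommRing R] :
    SimpleGraph {I : Ideal R // I ≠ ⊥ ∧ I ≠ ⊤} where
  Adj I J := I ≠ J ∧ IsEssentialIdeal (I.1 ⊔ J.1)
  symm := ⟨by
    rintro I J ⟨hne, h⟩
    exact ⟨hne.symm, by rwa [sup_comm]⟩⟩
  loopless := ⟨fun I h => h.1 rfl⟩

/-- The annihilating ideal graph of a commutative ring `R`: vertices are the nonzero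
annihilating ideals of `R`, with distinct vertices `I`, `J` adjacent iff `I * J = 0`. -/
def annihilatingIdealGraph (R : Type*) [CommRing R] :
    SimpleGraph {I : Ideal R // I ≠ ⊥ ∧ ∃ J : Ideal R, J ≠ ⊥ ∧ I * J = ⊥} where
  Adj I J := I ≠ J ∧ I.1 * J.1 = ⊥
  symm := ⟨by
    rintro I J ⟨hne, h⟩
    exact ⟨hne.symm, by rwa [mul_comm]⟩⟩
  loopless := ⟨fun I h => h.1 rfl⟩

/-- A set `W` of vertices of a graph `G` is a resolving set if any two distinct
vertices are distinguished by their distance to some element of `W`. -/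
def IsResolvingSet {V : Type*} (G : SimpleGraph V) (W : Set V) : Prop :=
  ∀ u v : V, u ≠ v → ∃ w ∈ W, G.dist u w ≠ G.dist v w

/-- The metric dimension of a graph: the least cardinality of a (finite) resolving set. -/
noncomputable def metricDim {V : Type*} (G : SimpleGraph V) : ℕ :=
  sInf {k : ℕ | ∃ W : Set V, W.Finite ∧ IsResolvingSet G W ∧ W.ncard = k}

/-- The degree of a vertex: the number of vertices adjacent to it. -/
noncomputable def gdeg {V : Type*} (G : SimpleGraph V) (v : V) : ℕ :=
  Nat.card {u : V // G.Adj v u}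

/-- The first Zagreb index: the sum of the squares of the vertex degrees. -/
noncomputable def zagreb1 {V : Type*} (G : SimpleGraph V) : ℕ :=
  ∑ᶠ v : V, (gdeg G v) ^ 2

/-- The second Zagreb index: the sum over edges `{u,v}` of `deg u * deg v`. -/
noncomputable def zagreb2 {V : Type*} (G : SimpleGraph V) : ℕ :=
  ∑ᶠ e ∈ G.edgeSet, Sym2.lift ⟨fun u v => gdeg G u * gdeg G v, fun u v => mul_comm _ _⟩ e

/-!
Write `n = ∏ qᵢ` with `qᵢ = pᵢ ^ mᵢ`. Every ideal of `ℤ/n` is `(d)` for a unique divisor `d ∣ n`,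
and `(d)` is essential iff no `qᵢ` divides `d` (if `qᵢ ∣ d`, then `(d) ∩ (n / pᵢ) = 0`). Give each
vertex `(d)` the type `{i | qᵢ ∣ d}`: two vertices are adjacent iff their types are disjoint, every
proper subset of the index set is a type, and, because two exponents exceed `1`, every singleton is
the type of at least two vertices. The vertices of type `∅` are adjacent to everything, so distinct
vertices are at distance `1` or `2` according to whether their types are disjoint; hence vertices of
equal type are twins and a resolving set misses at most one vertex of each of the `2^k - 1` types.
Conversely the complement of a set of representatives, one of each type, resolves the graph: two
representatives whose types differ at `i` are separated by a non-representative of type `{i}`.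
-/

open Finset Function Ideal SimpleGraph

namespace Nat

theorem Prime.pow_dvd_lcm_iff {p a d e : ℕ} (hp : p.Prime) (hd : d ≠ 0) (he : e ≠ 0) :
    p ^ a ∣ d.lcm e ↔ p ^ a ∣ d ∨ p ^ a ∣ e := by
  simp only [hp.pow_dvd_iff_le_factorization, hd, he, lcm_ne_zero, factorization_lcm,
    Finsupp.sup_apply, le_sup_iff, ne_eq, not_false_eq_true]

variable {ι : Type*} {p : ι → ℕ}

theorem pairwise_coprime_pow (hp : ∀ i, (p i).Prime) (hinj : Injective p) (e : ι → ℕ) :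
    Pairwise (Coprime on fun i => p i ^ e i) := fun i j hij =>
  Coprime.pow _ _ ((coprime_primes (hp i) (hp j)).2 (hinj.ne hij))

variable [Fintype ι]

theorem factorization_prod_pow_apply (hp : ∀ i, (p i).Prime) (hinj : Injective p) (e : ι → ℕ)
    (j : ι) : (∏ i, p i ^ e i).factorization (p j) = e j := by
  rw [factorization_prod fun i _ => pow_ne_zero _ (hp i).ne_zero]
  simp only [Finsupp.finsetSum_apply, (hp _).factorization_pow, Finsupp.single_apply]
  rw [sum_eq_single j (fun i _ hij => if_neg (hinj.ne hij)) (by simp), if_pos rfl]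

theorem prod_pow_injective (hp : ∀ i, (p i).Prime) (hinj : Injective p) :
    Injective fun e : ι → ℕ => ∏ i, p i ^ e i := fun e e' h => funext fun j => by
  rw [← factorization_prod_pow_apply hp hinj e, ← factorization_prod_pow_apply hp hinj e']
  exact congrArg (fun x => x.factorization (p j)) h

theorem pow_dvd_prod_pow_iff (hp : ∀ i, (p i).Prime) (hinj : Injective p) (e : ι → ℕ)
    {a : ℕ} {j : ι} : p j ^ a ∣ ∏ i, p i ^ e i ↔ a ≤ e j := by
  rw [(hp j).pow_dvd_iff_le_factorization
      (prod_ne_zero_iff.2 fun i _ => pow_ne_zero _ (hp i).ne_zero),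
    factorization_prod_pow_apply hp hinj]

theorem prod_pow_dvd_iff (hp : ∀ i, (p i).Prime) (hinj : Injective p) (e : ι → ℕ) {x : ℕ} :
    ∏ i, p i ^ e i ∣ x ↔ ∀ i, p i ^ e i ∣ x := by
  refine ⟨fun h i => (dvd_prod_of_mem _ (mem_univ i)).trans h, fun h => ?_⟩
  rw [← Int.natCast_dvd_natCast, cast_prod]
  exact Fintype.prod_dvd_of_coprime
    (fun i j hij => isCoprime_iff_coprime.2 (pairwise_coprime_pow hp hinj e hij))
    fun i => Int.natCast_dvd_natCast.2 (h i)

theorem card_divisors_prod_pow (hp : ∀ i, (p i).Prime) (hinj : Injective p) (m : ι → ℕ) :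
    (∏ i, p i ^ m i).divisors.card = ∏ i, (m i + 1) := by
  rw [← ArithmeticFunction.sigma_zero_apply,
    ArithmeticFunction.isMultiplicative_sigma.map_prod _ _
      fun i _ j _ hij => pairwise_coprime_pow hp hinj m hij]
  simp [ArithmeticFunction.sigma_zero_apply_prime_pow (hp _)]

theorem not_dvd_and_forall_not_dvd_lcm_iff [Nonempty ι] (hp : ∀ i, (p i).Prime)
    (hinj : Injective p) {m : ι → ℕ} (hm : ∀ i, m i ≠ 0) {n d : ℕ} (hn : n = ∏ i, p i ^ m i) (hd : d ∣ n) :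
    (¬ n ∣ d ∧ ∀ e, e ∣ n → ¬ n ∣ e → ¬ n ∣ d.lcm e) ↔ ∀ i, ¬ p i ^ m i ∣ d := by
  have hn0 : n ≠ 0 := hn ▸ prod_ne_zero_iff.2 fun i _ => pow_ne_zero _ (hp i).ne_zero
  have hqn : ∀ i, p i ^ m i ∣ n := fun i => hn ▸ dvd_prod_of_mem _ (mem_univ i)
  constructor
  · rintro ⟨-, h⟩ i hi
    obtain ⟨c, hc⟩ := (dvd_pow_self (p i) (hm i)).trans (hqn i)
    have hc0 : c ≠ 0 := by rintro rfl; exact hn0 (by simpa using hc)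
    refine h c (Dvd.intro_left _ hc.symm) (fun hnc => ?_) ?_
    · exact hc0 (eq_zero_of_dvd_of_lt hnc (hc ▸ lt_mul_left (pos_of_ne_zero hc0) (hp i).one_lt))
    · rw [hn, prod_pow_dvd_iff hp hinj]
      intro j
      rcases eq_or_ne j i with rfl | hji
      · exact hi.trans (dvd_lcm_left d c)
      · have hcop : Coprime (p j ^ m j) (p i) :=
          Coprime.pow_left _ ((coprime_primes (hp j) (hp i)).2 (hinj.ne hji))
        exact (hcop.dvd_of_dvd_mul_left (hc ▸ hqn j)).trans (dvd_lcm_right d c)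
  · intro h
    refine ⟨fun hnd => h (Classical.arbitrary ι) ((hqn _).trans hnd), fun e he hne hlcm => hne ?_⟩
    rw [hn, prod_pow_dvd_iff hp hinj] at hlcm ⊢
    exact fun i => (((hp i).pow_dvd_lcm_iff (ne_zero_of_dvd_ne_zero hn0 hd)
      (ne_zero_of_dvd_ne_zero hn0 he)).1 (hlcm i)).resolve_left (h i)

end Nat

namespace ZMod

variable {n d e : ℕ}

theorem map_span_natCast (d : ℕ) :
    (span {(d : ℤ)}).map (Int.castRingHom (ZMod n)) = span {(d : ZMod n)} := by
  rw [map_span, Set.image_singleton, map_natCast]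

theorem comap_span_natCast (hd : d ∣ n) :
    (span {(d : ZMod n)}).comap (Int.castRingHom (ZMod n)) = span {(d : ℤ)} := by
  rw [← map_span_natCast, comap_map_of_surjective _ intCast_surjective,
    ← RingHom.ker_eq_comap_bot, ker_intCastRingHom, sup_eq_left, span_singleton_le_span_singleton]
  exact Int.natCast_dvd_natCast.2 hd

theorem span_natCast_le_span_natCast_iff (he : e ∣ n) :
    span {(d : ZMod n)} ≤ span {(e : ZMod n)} ↔ e ∣ d := by
  rw [span_singleton_le_iff_mem, ← map_natCast (Int.castRingHom (ZMod n)) d, ← mem_comap,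
    comap_span_natCast he, mem_span_singleton, Int.natCast_dvd_natCast]

theorem span_natCast_eq_bot_iff : span {(d : ZMod n)} = ⊥ ↔ n ∣ d := by
  rw [span_singleton_eq_bot, natCast_eq_zero_iff]

theorem exists_dvd_span_natCast_eq (I : Ideal (ZMod n)) :
    ∃ d, d ∣ n ∧ span {(d : ZMod n)} = I := by
  obtain ⟨c, hc⟩ := Submodule.IsPrincipal.principal (I.comap (Int.castRingHom (ZMod n)))
  rw [submodule_span_eq, ← Int.span_natAbs] at hc
  refine ⟨c.natAbs, ?_, ?_⟩
  · rw [← Int.natCast_dvd_natCast, ← mem_span_singleton, ← hc, mem_comap, map_natCast,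
      natCast_self]
    exact I.zero_mem
  · rw [← map_span_natCast, ← hc, map_comap_of_surjective _ intCast_surjective]

theorem span_natCast_inf_span_natCast (hd : d ∣ n) (he : e ∣ n) :
    span {(d : ZMod n)} ⊓ span {(e : ZMod n)} = span {(d.lcm e : ZMod n)} := by
  apply comap_injective_of_surjective (Int.castRingHom (ZMod n)) intCast_surjective
  rw [comap_inf, comap_span_natCast hd, comap_span_natCast he,
    comap_span_natCast (Nat.lcm_dvd hd he), span_singleton_inf_span_singleton, ← Int.coe_lcm,
    Int.lcm_natCast_natCast]

theorem span_natCast_inj (hd : d ∣ n) (he : e ∣ n) :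
    span {(d : ZMod n)} = span {(e : ZMod n)} ↔ d = e :=
  ⟨fun h => Nat.dvd_antisymm ((span_natCast_le_span_natCast_iff hd).1 h.ge)
    ((span_natCast_le_span_natCast_iff he).1 h.le), fun h => h ▸ rfl⟩

theorem card_ideal [NeZero n] : Nat.card (Ideal (ZMod n)) = n.divisors.card := by
  rw [← Nat.card_eq_finsetCard]
  refine (Nat.card_eq_of_bijective (fun d : n.divisors => span {((d : ℕ) : ZMod n)})
    ⟨?_, ?_⟩).symm
  · rintro ⟨d, hd⟩ ⟨e, he⟩ hde
    exact Subtype.ext ((span_natCast_inj (Nat.dvd_of_mem_divisors hd)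
      (Nat.dvd_of_mem_divisors he)).1 hde)
  · intro I
    obtain ⟨d, hd, rfl⟩ := exists_dvd_span_natCast_eq I
    exact ⟨⟨d, Nat.mem_divisors.2 ⟨hd, NeZero.ne n⟩⟩, rfl⟩

theorem isEssentialIdeal_span_natCast_iff (hd : d ∣ n) :
    IsEssentialIdeal (span {(d : ZMod n)}) ↔
      ¬ n ∣ d ∧ ∀ e, e ∣ n → ¬ n ∣ e → ¬ n ∣ d.lcm e := by
  rw [IsEssentialIdeal, Ne, span_natCast_eq_bot_iff]
  refine and_congr_right fun _ => ⟨fun h e he hne => ?_, fun h J hJ => ?_⟩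
  · have := h _ (mt span_natCast_eq_bot_iff.1 hne)
    rwa [span_natCast_inf_span_natCast hd he, Ne, span_natCast_eq_bot_iff] at this
  · obtain ⟨e, he, rfl⟩ := exists_dvd_span_natCast_eq J
    rw [Ne, span_natCast_eq_bot_iff] at hJ
    rw [span_natCast_inf_span_natCast hd he, Ne, span_natCast_eq_bot_iff]
    exact h e he hJ

end ZMod

theorem card_subtype_ne_bot_and_ne_top {α : Type*} [Finite α] [PartialOrder α] [BoundedOrder α]
    [Nontrivial α] :
    Nat.card {a : α // a ≠ ⊥ ∧ a ≠ ⊤} = Nat.card α - 2 := by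
  have h := Set.ncard_compl ({⊥, ⊤} : Set α)
  rw [Set.ncard_pair bot_ne_top] at h
  rw [← h, ← Nat.card_coe_set_eq]
  congr
  ext; simp

section DisjointnessGraph

variable {V ι : Type*} {G : SimpleGraph V} {τ : V → Finset ι}

theorem dist_eq_ite_disjoint [DecidableEq ι]
    (hadj : ∀ u v, G.Adj u v ↔ u ≠ v ∧ Disjoint (τ u) (τ v))
    (hempty : ∃ z, τ z = ∅) {u w : V} (huw : u ≠ w) :
    G.dist u w = if Disjoint (τ u) (τ w) then 1 else 2 := by
  split_ifs with h
  · exact dist_eq_one_iff_adj.2 ((hadj u w).2 ⟨huw, h⟩)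
  · obtain ⟨z, hz⟩ := hempty
    have huz : G.Adj u z := (hadj u z).2 ⟨by rintro rfl; simp [hz] at h, by simp [hz]⟩
    have hzw : G.Adj z w := (hadj z w).2 ⟨by rintro rfl; simp [hz] at h, by simp [hz]⟩
    let walk : G.Walk u w := .cons huz (.cons hzw .nil)
    have hle : G.dist u w ≤ 2 := dist_le walk
    have hpos : 0 < G.dist u w := Reachable.pos_dist_of_ne ⟨walk⟩ huw
    have hne : G.dist u w ≠ 1 := fun h1 => h ((hadj u w).1 (dist_eq_one_iff_adj.1 h1)).2
    omega

theorem dist_ne_of_eq_singleton (hadj : ∀ u v, G.Adj u v ↔ u ≠ v ∧ Disjoint (τ u) (τ v))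
    (hempty : ∃ z, τ z = ∅) {u v w : V} {i : ι} (hw : τ w = {i}) (hu : i ∈ τ u) (hv : i ∉ τ v) :
    G.dist u w ≠ G.dist v w := by
  classical
  have hvw : v ≠ w := by rintro rfl; simp [hw] at hv
  rw [dist_eq_ite_disjoint hadj hempty hvw, if_pos (by simpa [hw] using hv)]
  rcases eq_or_ne u w with rfl | huw
  · simp
  · rw [dist_eq_ite_disjoint hadj hempty huw, if_neg (by simpa [hw] using hu)]
    simp

theorem injOn_compl_of_isResolvingSet (hadj : ∀ u v, G.Adj u v ↔ u ≠ v ∧ Disjoint (τ u) (τ v))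
    (hempty : ∃ z, τ z = ∅) {W : Set V} (hW : IsResolvingSet G W) : Set.InjOn τ Wᶜ := by
  classical
  intro u hu v hv huv
  by_contra hne
  obtain ⟨w, hw, hdist⟩ := hW u v hne
  have huw : u ≠ w := by rintro rfl; exact hu hw
  have hvw : v ≠ w := by rintro rfl; exact hv hw
  rw [dist_eq_ite_disjoint hadj hempty huw, dist_eq_ite_disjoint hadj hempty hvw, huv] at hdist
  exact hdist rfl

variable [Finite V] [Fintype ι]

theorem card_finset_ne_univ : Nat.card {S : Finset ι // S ≠ univ} = 2 ^ Fintype.card ι - 1 := by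
  classical
  rw [Nat.card_eq_fintype_card, Fintype.card_subtype_compl, Fintype.card_finset,
    Fintype.card_subtype_eq]

theorem card_sub_le_ncard_of_isResolvingSet
    (hadj : ∀ u v, G.Adj u v ↔ u ≠ v ∧ Disjoint (τ u) (τ v)) (hempty : ∃ z, τ z = ∅)
    (hne : ∀ v, τ v ≠ univ) {W : Set V} (hW : IsResolvingSet G W) :
    Nat.card V - (2 ^ Fintype.card ι - 1) ≤ W.ncard := by
  have h := Set.ncard_le_ncard_of_injOn τ (t := {S | S ≠ univ}) (fun v _ => hne v)
    (injOn_compl_of_isResolvingSet hadj hempty hW)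
  rw [← Nat.card_coe_set_eq {S : Finset ι | S ≠ univ}, Set.ncard_compl] at h
  have hcard := card_finset_ne_univ (ι := ι)
  simp only [Set.coe_ofPred] at h
  omega

theorem exists_isResolvingSet_ncard_eq
    (hadj : ∀ u v, G.Adj u v ↔ u ≠ v ∧ Disjoint (τ u) (τ v))
    (hempty : ∃ z, τ z = ∅)
    (hsurj : ∀ S, S ≠ univ → ∃ v, τ v = S)
    (hsingle : ∀ i, ∃ u v, u ≠ v ∧ τ u = {i} ∧ τ v = {i}) :
    ∃ W : Set V, IsResolvingSet G W ∧ W.ncard = Nat.card V - (2 ^ Fintype.card ι - 1) := by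
  choose rep hrep using fun S : {S : Finset ι // S ≠ univ} => hsurj S.1 S.2
  have hrep_inj : Injective rep := fun S T h => Subtype.ext ((hrep S).symm.trans (h ▸ hrep T))
  have hτ_inj : Set.InjOn τ (Set.range rep) := by
    rintro _ ⟨S, rfl⟩ _ ⟨T, rfl⟩ h
    exact congrArg rep (Subtype.ext ((hrep S).symm.trans (h.trans (hrep T))))
  have hsep : ∀ u v i, i ∈ τ u → i ∉ τ v → ∃ w ∈ (Set.range rep)ᶜ, G.dist u w ≠ G.dist v w := by
    intro u v i hu hv
    obtain ⟨a, b, hab, ha, hb⟩ := hsingle i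
    have hab_rep : a ∉ Set.range rep ∨ b ∉ Set.range rep := by
      by_contra! h
      exact hab (hτ_inj h.1 h.2 (ha.trans hb.symm))
    rcases hab_rep with h | h
    · exact ⟨a, h, dist_ne_of_eq_singleton hadj hempty ha hu hv⟩
    · exact ⟨b, h, dist_ne_of_eq_singleton hadj hempty hb hu hv⟩
  refine ⟨(Set.range rep)ᶜ, fun u v huv => ?_, ?_⟩
  · classical
    have hdist_pos : ∀ {u v}, u ≠ v → G.dist u v ≠ 0 := fun huv => by
      rw [dist_eq_ite_disjoint hadj hempty huv]; split_ifs <;> simp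
    by_cases hu : u ∈ (Set.range rep)ᶜ
    · exact ⟨u, hu, by rw [dist_self]; exact (hdist_pos huv.symm).symm⟩
    by_cases hv : v ∈ (Set.range rep)ᶜ
    · exact ⟨v, hv, by rw [dist_self]; exact hdist_pos huv⟩
    have hne : τ u ≠ τ v := fun h => huv (hτ_inj (not_not.1 hu) (not_not.1 hv) h)
    by_cases hsub : τ u ⊆ τ v
    · obtain ⟨i, hvi, hui⟩ := not_subset.1 fun h => hne (subset_antisymm hsub h)
      obtain ⟨w, hw, h⟩ := hsep v u i hvi hui
      exact ⟨w, hw, Ne.symm h⟩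
    · obtain ⟨i, hui, hvi⟩ := not_subset.1 hsub
      exact hsep u v i hui hvi
  · rw [Set.ncard_compl, Set.ncard_range_of_injective hrep_inj, card_finset_ne_univ]

theorem metricDim_eq_of_adj_iff_disjoint [Nonempty ι]
    (hadj : ∀ u v, G.Adj u v ↔ u ≠ v ∧ Disjoint (τ u) (τ v)) (hne : ∀ v, τ v ≠ univ)
    (hsurj : ∀ S, S ≠ univ → ∃ v, τ v = S)
    (hsingle : ∀ i, ∃ u v, u ≠ v ∧ τ u = {i} ∧ τ v = {i}) :
    metricDim G = Nat.card V - (2 ^ Fintype.card ι - 1) := by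
  have hempty : ∃ z, τ z = ∅ := hsurj ∅ univ_nonempty.ne_empty.symm
  obtain ⟨W, hW, hcard⟩ := exists_isResolvingSet_ncard_eq hadj hempty hsurj hsingle
  refine le_antisymm (Nat.sInf_le ⟨W, W.toFinite, hW, hcard⟩)
    (le_csInf ⟨_, W, W.toFinite, hW, hcard⟩ ?_)
  rintro _ ⟨W', -, hW', rfl⟩
  exact card_sub_le_ncard_of_isResolvingSet hadj hempty hne hW'

end DisjointnessGraph

section EssentialIdealGraph

open Classical in
/-- `i ∈ vanishingComponents p m I` iff `I` maps to zero in the factor `ZMod (p i ^ m i)` of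
`ZMod n ≃ ∏ i, ZMod (p i ^ m i)`. -/
noncomputable def vanishingComponents {ι : Type*} [Fintype ι] (p m : ι → ℕ) {n : ℕ}
    (I : Ideal (ZMod n)) : Finset ι :=
  univ.filter fun i => I ≤ span {((p i ^ m i : ℕ) : ZMod n)}

variable {ι : Type*} [Fintype ι] {p m : ι → ℕ} {n : ℕ}

theorem mem_vanishingComponents {I : Ideal (ZMod n)} {i : ι} :
    i ∈ vanishingComponents p m I ↔ I ≤ span {((p i ^ m i : ℕ) : ZMod n)} := by
  simp [vanishingComponents]

theorem vanishingComponents_sup [DecidableEq ι] (I J : Ideal (ZMod n)) :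
    vanishingComponents p m (I ⊔ J) = vanishingComponents p m I ∩ vanishingComponents p m J := by
  ext i
  simp only [mem_inter, mem_vanishingComponents, sup_le_iff]

theorem mem_vanishingComponents_span_natCast (hn : n = ∏ i, p i ^ m i) (d : ℕ) {i : ι} :
    i ∈ vanishingComponents p m (span {(d : ZMod n)}) ↔ p i ^ m i ∣ d := by
  rw [mem_vanishingComponents,
    ZMod.span_natCast_le_span_natCast_iff (hn ▸ dvd_prod_of_mem _ (mem_univ i))]

theorem isEssentialIdeal_iff_vanishingComponents_eq_empty [Nonempty ι]
    (hp : ∀ i, (p i).Prime) (hinj : Injective p) (hm : ∀ i, m i ≠ 0) (hn : n = ∏ i, p i ^ m i)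
    (I : Ideal (ZMod n)) : IsEssentialIdeal I ↔ vanishingComponents p m I = ∅ := by
  obtain ⟨d, hd, rfl⟩ := ZMod.exists_dvd_span_natCast_eq I
  simp_rw [eq_empty_iff_forall_notMem, ZMod.isEssentialIdeal_span_natCast_iff hd,
    mem_vanishingComponents_span_natCast hn]
  exact Nat.not_dvd_and_forall_not_dvd_lcm_iff hp hinj hm hn hd

theorem essentialIdealGraph_adj_iff [Nonempty ι] (hp : ∀ i, (p i).Prime) (hinj : Injective p)
    (hm : ∀ i, m i ≠ 0) (hn : n = ∏ i, p i ^ m i) (I J : {I : Ideal (ZMod n) // I ≠ ⊥ ∧ I ≠ ⊤}) :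
    (essentialIdealGraph (ZMod n)).Adj I J ↔
      I ≠ J ∧ Disjoint (vanishingComponents p m I.1) (vanishingComponents p m J.1) := by
  classical
  rw [disjoint_iff_inter_eq_empty, ← vanishingComponents_sup,
    ← isEssentialIdeal_iff_vanishingComponents_eq_empty hp hinj hm hn]
  rfl

theorem vanishingComponents_ne_univ (hp : ∀ i, (p i).Prime) (hinj : Injective p)
    (hn : n = ∏ i, p i ^ m i) {I : Ideal (ZMod n)} (hI : I ≠ ⊥) :
    vanishingComponents p m I ≠ univ := by
  obtain ⟨d, -, rfl⟩ := ZMod.exists_dvd_span_natCast_eq I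
  refine fun h => hI (ZMod.span_natCast_eq_bot_iff.2 ?_)
  rw [hn, Nat.prod_pow_dvd_iff hp hinj]
  exact fun i => (mem_vanishingComponents_span_natCast hn d).1 (h ▸ mem_univ i)

theorem mem_vanishingComponents_span_prod_pow (hp : ∀ i, (p i).Prime) (hinj : Injective p)
    (hn : n = ∏ i, p i ^ m i) (e : ι → ℕ) {j : ι} :
    j ∈ vanishingComponents p m (span {((∏ i, p i ^ e i : ℕ) : ZMod n)}) ↔ m j ≤ e j :=
  (mem_vanishingComponents_span_natCast hn _).trans (Nat.pow_dvd_prod_pow_iff hp hinj e)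

theorem span_prod_pow_ne_bot (hp : ∀ i, (p i).Prime) (hinj : Injective p)
    (hn : n = ∏ i, p i ^ m i) {e : ι → ℕ} (hem : e ≤ m) (hne : e ≠ m) :
    span {((∏ i, p i ^ e i : ℕ) : ZMod n)} ≠ ⊥ := fun h =>
  hne (le_antisymm hem fun i =>
    (mem_vanishingComponents_span_prod_pow hp hinj hn e).1
      (by rw [h]; exact mem_vanishingComponents.2 bot_le))

theorem span_prod_pow_ne_top (hp : ∀ i, (p i).Prime) (hn : n = ∏ i, p i ^ m i) {e : ι → ℕ}
    (hem : e ≤ m) (hpos : e ≠ 0) : span {((∏ i, p i ^ e i : ℕ) : ZMod n)} ≠ ⊤ := by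
  obtain ⟨a, ha⟩ : ∃ a, e a ≠ 0 := by
    by_contra! h
    exact hpos (funext h)
  rw [Ne, span_singleton_eq_top, ZMod.isUnit_iff_coprime]
  intro hcop
  have hpa : p a ∣ ∏ i, p i ^ e i := (dvd_pow_self _ ha).trans (dvd_prod_of_mem _ (mem_univ a))
  have hdn : ∏ i, p i ^ e i ∣ n := hn ▸ prod_dvd_prod_of_dvd _ _ fun i _ => pow_dvd_pow _ (hem i)
  exact (hp a).one_lt.ne' (Nat.eq_one_of_dvd_coprimes hcop hpa (hpa.trans hdn))

theorem exists_vanishingComponents_eq [DecidableEq ι] (hp : ∀ i, (p i).Prime) (hinj : Injective p)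
    (hn : n = ∏ i, p i ^ m i) {S : Finset ι} (hS : S ≠ univ) {l : ι → ℕ} (hl : ∀ i, l i < m i)
    (hSl : ∃ a, a ∈ S ∨ l a ≠ 0) :
    ∃ v : {I : Ideal (ZMod n) // I ≠ ⊥ ∧ I ≠ ⊤},
      v.1 = span {((∏ i, p i ^ (if i ∈ S then m i else l i) : ℕ) : ZMod n)} ∧
      vanishingComponents p m v.1 = S := by
  set e : ι → ℕ := fun i => if i ∈ S then m i else l i
  have hem : e ≤ m := fun i => by by_cases hi : i ∈ S <;> simp [e, hi, (hl i).le]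
  have hne : e ≠ m := by
    obtain ⟨j, hj⟩ : ∃ j, j ∉ S := by
      by_contra! h
      exact hS (eq_univ_of_forall h)
    refine fun h => (hl j).ne ?_
    simpa [e, hj] using congrFun h j
  have hpos : e ≠ 0 := by
    obtain ⟨a, ha⟩ := hSl
    refine fun h => ?_
    have hla := hl a
    have hea := congrFun h a
    by_cases haS : a ∈ S <;> simp [e, haS] at hea ha <;> omega
  refine ⟨⟨_, span_prod_pow_ne_bot hp hinj hn hem hne, span_prod_pow_ne_top hp hn hem hpos⟩,
    rfl, ?_⟩
  ext i
  rw [mem_vanishingComponents_span_prod_pow hp hinj hn]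
  by_cases hi : i ∈ S <;> simp [e, hi, hl i]

theorem exists_ne_vanishingComponents_eq_singleton [DecidableEq ι] (hp : ∀ i, (p i).Prime)
    (hinj : Injective p) (hm : ∀ i, m i ≠ 0) (hn : n = ∏ i, p i ^ m i) {i j : ι} (hji : j ≠ i)
    (hj : 1 < m j) : ∃ u v : {I : Ideal (ZMod n) // I ≠ ⊥ ∧ I ≠ ⊤}, u ≠ v ∧
      vanishingComponents p m u.1 = {i} ∧ vanishingComponents p m v.1 = {i} := by
  have hS : ({i} : Finset ι) ≠ univ := fun h => hji (mem_singleton.1 (h ▸ mem_univ j))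
  obtain ⟨u, hu, hτu⟩ := exists_vanishingComponents_eq hp hinj hn hS (l := fun i' => m i' - 1)
    (fun i' => by have := hm i'; omega) ⟨i, .inl (mem_singleton_self i)⟩
  obtain ⟨v, hv, hτv⟩ := exists_vanishingComponents_eq hp hinj hn hS (l := 0)
    (fun i' => Nat.pos_of_ne_zero (hm i')) ⟨i, .inl (mem_singleton_self i)⟩
  refine ⟨u, v, fun huv => ?_, hτu, hτv⟩
  have hdvd (l : ι → ℕ) (hl : l ≤ m) :
      ∏ i', p i' ^ (if i' ∈ ({i} : Finset ι) then m i' else l i') ∣ n :=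
    hn ▸ prod_dvd_prod_of_dvd _ _ fun i' _ => pow_dvd_pow _ (by split_ifs <;> simp [hl i'])
  have hspan := hu.symm.trans ((congrArg Subtype.val huv).trans hv)
  rw [ZMod.span_natCast_inj (hdvd _ fun _ => Nat.sub_le _ _) (hdvd 0 fun _ => Nat.zero_le _)]
    at hspan
  have hexp := congrFun (Nat.prod_pow_injective hp hinj hspan) j
  simp only [mem_singleton, hji, if_false, Pi.zero_apply] at hexp
  omega

theorem metricDim_essentialIdealGraph_zmod (hp : ∀ i, (p i).Prime) (hinj : Injective p)
    (hm : ∀ i, m i ≠ 0) (htwo : ∃ i j : ι, i ≠ j ∧ 1 < m i ∧ 1 < m j) (hn : n = ∏ i, p i ^ m i) :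
    metricDim (essentialIdealGraph (ZMod n)) =
      Nat.card {I : Ideal (ZMod n) // I ≠ ⊥ ∧ I ≠ ⊤} - (2 ^ Fintype.card ι - 1) := by
  classical
  obtain ⟨a, b, hab, ha, hb⟩ := htwo
  have : Nonempty ι := ⟨a⟩
  have : NeZero n := ⟨hn ▸ prod_ne_zero_iff.2 fun i _ => pow_ne_zero _ (hp i).ne_zero⟩
  refine metricDim_eq_of_adj_iff_disjoint (G := essentialIdealGraph (ZMod n))
    (τ := fun v => vanishingComponents p m v.1) (essentialIdealGraph_adj_iff hp hinj hm hn)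
    (fun v => vanishingComponents_ne_univ hp hinj hn v.2.1) (fun S hS => ?_) (fun i => ?_)
  · obtain ⟨v, -, hv⟩ := exists_vanishingComponents_eq hp hinj hn hS (l := fun i => m i - 1)
      (fun i => by have := hm i; omega) ⟨a, or_iff_not_imp_left.2 fun _ => by omega⟩
    exact ⟨v, hv⟩
  · obtain ⟨j, hji, hj⟩ : ∃ j, j ≠ i ∧ 1 < m j :=
      if hai : a = i then ⟨b, hai ▸ hab.symm, hb⟩ else ⟨a, hai, ha⟩
    exact exists_ne_vanishingComponents_eq_singleton hp hinj hm hn hji hj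

theorem card_nontrivial_ideal_zmod [Nonempty ι] (hp : ∀ i, (p i).Prime) (hinj : Injective p)
    (hm : ∀ i, m i ≠ 0) (hn : n = ∏ i, p i ^ m i) :
    Nat.card {I : Ideal (ZMod n) // I ≠ ⊥ ∧ I ≠ ⊤} = ∏ i, (m i + 1) - 2 := by
  obtain ⟨a⟩ := ‹Nonempty ι›
  have : NeZero n := ⟨hn ▸ prod_ne_zero_iff.2 fun i _ => pow_ne_zero _ (hp i).ne_zero⟩
  have : Fact (1 < n) := ⟨(Nat.one_lt_pow (hm a) (hp a).one_lt).trans_le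
    (Nat.le_of_dvd (NeZero.pos n) (hn ▸ dvd_prod_of_mem _ (mem_univ a)))⟩
  rw [card_subtype_ne_bot_and_ne_top, ZMod.card_ideal, hn, Nat.card_divisors_prod_pow hp hinj]

end EssentialIdealGraph

theorem stmt_11_general (k : ℕ) (p : Fin k → ℕ) (m : Fin k → ℕ)
    (hp : ∀ i, (p i).Prime) (hmono : StrictMono p)
    (hm : ∀ i, 1 ≤ m i) (htwo : ∃ i j : Fin k, i ≠ j ∧ 1 < m i ∧ 1 < m j)
    (n : ℕ) (hn : n = ∏ i, p i ^ m i)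
    (T : ℕ) (hT : T = (∏ i, (m i + 1)) - 2) :
    metricDim (essentialIdealGraph (ZMod n)) = T - (2 ^ k - 1) := by
  have hm' : ∀ i, m i ≠ 0 := fun i => Nat.one_le_iff_ne_zero.1 (hm i)
  have : Nonempty (Fin k) := htwo.elim fun a _ => ⟨a⟩
  rw [metricDim_essentialIdealGraph_zmod hp hmono.injective hm' htwo hn,
    card_nontrivial_ideal_zmod hp hmono.injective hm' hn, Fintype.card_fin, hT]

/-- For `n = p₁^{m₁} ⋯ p_k^{m_k}` with `k ≥ 2` distinct primes and
`mᵢ > 1` for at least two indices, the metric dimension of the essential ideal graph of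
`ℤ/nℤ` equals `T - (2^k - 1)`, where `T = ∏ (mᵢ + 1) - 2`. -/
theorem stmt_11 (k : ℕ) (hk : 2 ≤ k) (p : Fin k → ℕ) (m : Fin k → ℕ)
    (hp : ∀ i, (p i).Prime) (hmono : StrictMono p)
    (hm : ∀ i, 1 ≤ m i) (htwo : ∃ i j : Fin k, i ≠ j ∧ 1 < m i ∧ 1 < m j)
    (n : ℕ) (hn : n = ∏ i, p i ^ m i)
    (T : ℕ) (hT : T = (∏ i, (m i + 1)) - 2) :
    metricDim (essentialIdealGraph (ZMod n)) = T - (2 ^ k - 1) :=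
  stmt_11_general k p m hp hmono hm htwo n hn T hT
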